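/- arXiv:2605.09136 — 5 statements merged into one kernel-verified Lean document; each statement's English description precedes it below -/
import Mathlib

section
/- For γ > 0, W > 0, and μ, p ∈ (0,1), let x^γ(μ,p) = W(R−1)/((1−p) + R p) with R = exp((logit(μ) − logit(p))/γ) be the CRRA demand. Then for every fixed (μ,p) ∈ (0,1)², lim_{γ→∞} γ·x^γ(μ,p) = W·(logit(μ) − logit(p)), and the convergence of (μ,p) ↦ γ·x^γ(μ,p) to (μ,p) ↦ W·(logit(μ) − logit(p)) as γ → ∞ is uniform on every compact subset of (0,1)². -/
open Real Filter

noncomputable def logit (q : ℝ) : ℝ := Real.log (q / (1 - q))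

/-- The CRRA binary-asset demand with risk aversion `γ`, wealth `W`, posterior `μ`, price `p`. -/
noncomputable def crraDemand (γ W μ p : ℝ) : ℝ :=
  W * (Real.exp ((logit μ - logit p) / γ) - 1) /
    ((1 - p) + Real.exp ((logit μ - logit p) / γ) * p)

noncomputable def phi (u : ℝ) : ℝ := if u = 0 then 1 else (Real.exp u - 1) / u

lemma phi_continuous : Continuous phi := by
  rw [continuous_iff_continuousAt]
  intro u
  rcases eq_or_ne u 0 with rfl | hu
  · have h1 : Tendsto (fun v => (Real.exp v - 1) / v) (nhdsWithin (0:ℝ) {0}ᶜ) (nhds 1) := by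
      have h := Real.hasDerivAt_exp 0
      rw [hasDerivAt_iff_tendsto_slope] at h
      simpa [slope_fun_def, Real.exp_zero, div_eq_inv_mul] using h
    have h2 : Tendsto phi (nhdsWithin (0:ℝ) {0}ᶜ) (nhds 1) := by
      refine h1.congr' ?_
      filter_upwards [eventually_mem_nhdsWithin] with v hv
      have : v ≠ 0 := hv
      simp [phi, this]
    have : ContinuousWithinAt phi {(0:ℝ)}ᶜ 0 := by
      simpa [ContinuousWithinAt, phi] using h2
    exact continuousWithinAt_compl_self.mp this
  · have hf : ContinuousAt (fun v => (Real.exp v - 1) / v) u :=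
      ((Real.continuous_exp.sub continuous_const).continuousAt).div continuousAt_id hu
    refine hf.congr ?_
    filter_upwards [isOpen_compl_singleton.mem_nhds hu] with v hv
    have : v ≠ 0 := hv
    simp [phi, this]

lemma logit_continuousOn : ContinuousOn logit (Set.Ioo 0 1) := by
  have h : ContinuousOn (fun q : ℝ => q / (1 - q)) (Set.Ioo 0 1) :=
    continuousOn_id.div (continuous_const.sub continuous_id).continuousOn
      (fun q hq => by have h2 := hq.2; intro h0; nlinarith [sub_eq_zero.mp (by linarith : (1:ℝ) - q = 0)])
  exact h.log (fun q hq => ne_of_gt (div_pos hq.1 (by linarith [hq.2])))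

noncomputable def Gfun (W : ℝ) (z : ℝ × ℝ × ℝ) : ℝ :=
  W * (logit z.2.1 - logit z.2.2) * phi (z.1 * (logit z.2.1 - logit z.2.2)) /
    ((1 - z.2.2) + Real.exp (z.1 * (logit z.2.1 - logit z.2.2)) * z.2.2)

lemma Gfun_zero (W μ p : ℝ) : Gfun W (0, μ, p) = W * (logit μ - logit p) := by
  simp [Gfun, phi]

lemma key (γ W μ p : ℝ) (hγ : 0 < γ) :
    γ * crraDemand γ W μ p = Gfun W (1/γ, μ, p) := by
  have hγ' : γ ≠ 0 := ne_of_gt hγ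
  set t := logit μ - logit p with ht
  have h1 : (1/γ) * t = t / γ := by ring
  unfold crraDemand Gfun
  simp only [← ht, h1]
  by_cases h : t = 0
  · simp [phi, h, zero_div]
  · rw [phi, if_neg (div_ne_zero h hγ'), mul_div_assoc']
    congr 1
    field_simp

lemma Gfun_continuousOn (W : ℝ) :
    ContinuousOn (Gfun W)
      (Set.univ ×ˢ (Set.Ioo (0:ℝ) 1 ×ˢ Set.Ioo (0:ℝ) 1)) := by
  set S : Set (ℝ × ℝ × ℝ) := Set.univ ×ˢ (Set.Ioo (0:ℝ) 1 ×ˢ Set.Ioo (0:ℝ) 1) with hS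
  have hL1 : ContinuousOn (fun z : ℝ × ℝ × ℝ => logit z.2.1) S :=
    logit_continuousOn.comp (continuous_fst.comp continuous_snd).continuousOn
      (fun z hz => hz.2.1)
  have hL2 : ContinuousOn (fun z : ℝ × ℝ × ℝ => logit z.2.2) S :=
    logit_continuousOn.comp (continuous_snd.comp continuous_snd).continuousOn
      (fun z hz => hz.2.2)
  have hT : ContinuousOn (fun z : ℝ × ℝ × ℝ => logit z.2.1 - logit z.2.2) S := hL1.sub hL2
  have hsT : ContinuousOn (fun z : ℝ × ℝ × ℝ => z.1 * (logit z.2.1 - logit z.2.2)) S :=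
    continuous_fst.continuousOn.mul hT
  have hnum : ContinuousOn
      (fun z : ℝ × ℝ × ℝ => W * (logit z.2.1 - logit z.2.2) *
        phi (z.1 * (logit z.2.1 - logit z.2.2))) S :=
    (continuousOn_const.mul hT).mul (phi_continuous.comp_continuousOn hsT)
  have hden : ContinuousOn
      (fun z : ℝ × ℝ × ℝ => (1 - z.2.2) +
        Real.exp (z.1 * (logit z.2.1 - logit z.2.2)) * z.2.2) S :=
    ((continuous_const.sub (continuous_snd.comp continuous_snd)).continuousOn).add
      ((Real.continuous_exp.comp_continuousOn hsT).mul
        (continuous_snd.comp continuous_snd).continuousOn)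
  refine hnum.div hden ?_
  intro z hz
  have hp0 : 0 < z.2.2 := hz.2.2.1
  have hp1 : z.2.2 < 1 := hz.2.2.2
  have := Real.exp_pos (z.1 * (logit z.2.1 - logit z.2.2))
  nlinarith

lemma unif (W : ℝ) (K : Set (ℝ × ℝ)) (hK : K ⊆ Set.Ioo (0:ℝ) 1 ×ˢ Set.Ioo (0:ℝ) 1)
    (hKc : IsCompact K) :
    TendstoUniformlyOn (fun (γ : ℝ) (q : ℝ × ℝ) => γ * crraDemand γ W q.1 q.2)
      (fun q => W * (logit q.1 - logit q.2)) atTop K := by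
  rw [Metric.tendstoUniformlyOn_iff]
  intro ε hε
  set S' : Set (ℝ × ℝ × ℝ) := Set.Icc (0:ℝ) 1 ×ˢ K with hS'
  have hS'c : IsCompact S' := isCompact_Icc.prod hKc
  have hsub : S' ⊆ Set.univ ×ˢ (Set.Ioo (0:ℝ) 1 ×ˢ Set.Ioo (0:ℝ) 1) :=
    fun z hz => ⟨trivial, hK hz.2⟩
  have hu : UniformContinuousOn (Gfun W) S' :=
    hS'c.uniformContinuousOn_of_continuous ((Gfun_continuousOn W).mono hsub)
  rw [Metric.uniformContinuousOn_iff] at hu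
  obtain ⟨δ, hδ, hδ'⟩ := hu ε hε
  filter_upwards [eventually_ge_atTop (max (2/δ) 1)] with γ hγ q hq
  have hγ1 : (1:ℝ) ≤ γ := le_trans (le_max_right _ _) hγ
  have hγ0 : 0 < γ := lt_of_lt_of_le one_pos hγ1
  have hinv1 : 1/γ ≤ δ/2 := by
    rw [div_le_div_iff₀ hγ0 two_pos]
    have h2 : 2/δ ≤ γ := le_trans (le_max_left _ _) hγ
    calc (1:ℝ) * 2 = 2 := by ring
    _ = (2/δ) * δ := by field_simp
    _ ≤ γ * δ := mul_le_mul_of_nonneg_right h2 (le_of_lt hδ)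
    _ = δ * γ := mul_comm _ _
  have hinv : 1/γ ∈ Set.Icc (0:ℝ) 1 := ⟨by positivity, by rw [div_le_one hγ0]; linarith⟩
  have hd : dist ((1/γ, q) : ℝ × ℝ × ℝ) ((0, q) : ℝ × ℝ × ℝ) < δ := by
    rw [Prod.dist_eq]
    simp only [dist_self, Real.dist_eq, sub_zero]
    rw [abs_of_nonneg (by positivity : (0:ℝ) ≤ 1/γ)]
    have : max (1/γ) 0 = 1/γ := max_eq_left (by positivity)
    rw [this]; linarith
  have hmem1 : ((1/γ, q) : ℝ × ℝ × ℝ) ∈ S' := ⟨hinv, hq⟩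
  have hmem0 : ((0, q) : ℝ × ℝ × ℝ) ∈ S' := ⟨⟨le_refl 0, zero_le_one⟩, hq⟩
  have hdist := hδ' _ hmem1 _ hmem0 hd
  have e1 : γ * crraDemand γ W q.1 q.2 = Gfun W (1/γ, q) := by
    rw [key γ W q.1 q.2 hγ0]
  have e2 : W * (logit q.1 - logit q.2) = Gfun W (0, q) := by
    rw [← Gfun_zero W q.1 q.2]
  rw [e1, e2, dist_comm]
  exact hdist

/-- `γ·x^γ(μ,p) → W·(logit μ − logit p)` as `γ → ∞`, pointwise on `(0,1)²`
and uniformly on every compact subset of `(0,1)²`. -/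
theorem crra_demand_cara_limit (W : ℝ) (hW : 0 < W) :
    (∀ μ p : ℝ, μ ∈ Set.Ioo (0:ℝ) 1 → p ∈ Set.Ioo (0:ℝ) 1 →
      Tendsto (fun γ : ℝ => γ * crraDemand γ W μ p) atTop
        (nhds (W * (logit μ - logit p)))) ∧
    (∀ K : Set (ℝ × ℝ), K ⊆ Set.Ioo (0:ℝ) 1 ×ˢ Set.Ioo (0:ℝ) 1 → IsCompact K →
      TendstoUniformlyOn (fun (γ : ℝ) (q : ℝ × ℝ) => γ * crraDemand γ W q.1 q.2)
        (fun q => W * (logit q.1 - logit q.2)) atTop K) := by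
  constructor
  · intro μ p hμ hp
    have h := unif W {(μ, p)} (Set.singleton_subset_iff.mpr ⟨hμ, hp⟩) isCompact_singleton
    rw [Metric.tendstoUniformlyOn_iff] at h
    rw [Metric.tendsto_nhds]
    intro ε hε
    filter_upwards [h ε hε] with γ hγ
    have := hγ (μ, p) rfl
    simpa [dist_comm] using this
  · intro K hK hKc
    exact unif W K hK hKc
end

section
/- Let K ≥ 1, γ > 0, and for each k = 1,…,K let W_k > 0 and μ_k ∈ (0,1). Define x_k(p) = W_k(R_k − 1)/((1−p) + R_k p) with R_k = exp((logit(μ_k) − logit(p))/γ) for p ∈ (0,1). Then the market-clearing equation Σ_{k=1}^K x_k(p) = 0 has exactly one solution p* ∈ (0,1). -/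
open Real

lemma logit_strictMono {a b : ℝ} (ha : 0 < a) (hab : a < b) (hb : b < 1) :
    logit a < logit b := by
  unfold logit
  have h1a : 0 < 1 - a := by linarith
  have h1b : 0 < 1 - b := by linarith
  apply Real.log_lt_log (by positivity)
  rw [div_lt_div_iff₀ h1a h1b]
  nlinarith

lemma den_pos {R p : ℝ} (hR : 0 < R) (hp : p ∈ Set.Ioo (0:ℝ) 1) :
    0 < (1 - p) + R * p := by
  have := hp.1; have := hp.2; nlinarith

lemma crraDemand_anti (γ : ℝ) (hγ : 0 < γ) (W m : ℝ) (hW : 0 < W)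
    (hm : m ∈ Set.Ioo (0:ℝ) 1) {p q : ℝ} (hp : p ∈ Set.Ioo (0:ℝ) 1)
    (hq : q ∈ Set.Ioo (0:ℝ) 1) (hpq : p < q) :
    crraDemand γ W m q < crraDemand γ W m p := by
  set R1 := Real.exp ((logit m - logit p) / γ) with hR1
  set R2 := Real.exp ((logit m - logit q) / γ) with hR2
  have hR1pos : 0 < R1 := Real.exp_pos _
  have hR2pos : 0 < R2 := Real.exp_pos _
  have hR21 : R2 < R1 := by
    apply Real.exp_lt_exp.2
    have := logit_strictMono hp.1 hpq hq.2
    have h2 : (logit m - logit q) / γ < (logit m - logit p) / γ := by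
      apply div_lt_div_of_pos_right (by linarith) hγ
    exact h2
  have d1 : 0 < (1 - p) + R1 * p := den_pos hR1pos hp
  have d2 : 0 < (1 - p) + R2 * p := den_pos hR2pos hp
  have d3 : 0 < (1 - q) + R2 * q := den_pos hR2pos hq
  unfold crraDemand
  rw [← hR1, ← hR2, mul_div_assoc, mul_div_assoc]
  apply mul_lt_mul_of_pos_left ?_ hW
  calc (R2 - 1) / ((1 - q) + R2 * q) ≤ (R2 - 1) / ((1 - p) + R2 * p) := by
        rw [div_le_div_iff₀ d3 d2]
        nlinarith [sq_nonneg (R2 - 1), hp.1, hq.2]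
    _ < (R1 - 1) / ((1 - p) + R1 * p) := by
        rw [div_lt_div_iff₀ d2 d1]
        nlinarith [hp.1, hp.2]

lemma crraDemand_pos (γ : ℝ) (hγ : 0 < γ) (W m : ℝ) (hW : 0 < W)
    (hm : m ∈ Set.Ioo (0:ℝ) 1) {p : ℝ} (hp : p ∈ Set.Ioo (0:ℝ) 1) (hpm : p < m) :
    0 < crraDemand γ W m p := by
  have hR : 1 < Real.exp ((logit m - logit p) / γ) := by
    rw [show (1:ℝ) = Real.exp 0 by simp]
    apply Real.exp_lt_exp.2
    have := logit_strictMono hp.1 hpm hm.2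
    exact div_pos (by linarith) hγ
  unfold crraDemand
  exact div_pos (mul_pos hW (by linarith)) (den_pos (by positivity) hp)

lemma crraDemand_neg (γ : ℝ) (hγ : 0 < γ) (W m : ℝ) (hW : 0 < W)
    (hm : m ∈ Set.Ioo (0:ℝ) 1) {p : ℝ} (hp : p ∈ Set.Ioo (0:ℝ) 1) (hpm : m < p) :
    crraDemand γ W m p < 0 := by
  have hR : Real.exp ((logit m - logit p) / γ) < 1 := by
    rw [show (1:ℝ) = Real.exp 0 by simp]
    apply Real.exp_lt_exp.2
    have := logit_strictMono hm.1 hpm hp.2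
    have : logit m - logit p < 0 := by linarith
    exact div_neg_of_neg_of_pos this hγ
  unfold crraDemand
  exact div_neg_of_neg_of_pos
    (mul_neg_of_pos_of_neg hW (by linarith)) (den_pos (Real.exp_pos _) hp)

lemma crraDemand_contOn (γ : ℝ) (hγ : 0 < γ) (W m : ℝ) :
    ContinuousOn (fun p => crraDemand γ W m p) (Set.Ioo (0:ℝ) 1) := by
  intro p hp
  apply ContinuousAt.continuousWithinAt
  have h1p : (0:ℝ) < 1 - p := by linarith [hp.2]
  have hp0 : (0:ℝ) < p := hp.1
  have hlog : ContinuousAt logit p := by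
    unfold logit
    apply ContinuousAt.log
    · exact continuousAt_id.div (continuousAt_const.sub continuousAt_id) h1p.ne'
    · exact (div_pos hp0 h1p).ne'
  have hR : ContinuousAt (fun p => Real.exp ((logit m - logit p) / γ)) p :=
    Real.continuous_exp.continuousAt.comp ((continuousAt_const.sub hlog).div_const γ)
  unfold crraDemand
  apply ContinuousAt.div
  · exact continuousAt_const.mul (hR.sub continuousAt_const)
  · exact (continuousAt_const.sub continuousAt_id).add (hR.mul continuousAt_id)
  · exact (den_pos (Real.exp_pos _) hp).ne'


/-- The CRRA market-clearing equation `Σ_k x_k(p) = 0` has exactly one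
solution `p* ∈ (0,1)`. -/
theorem crra_clearing_exists_unique
    (K : ℕ) (hK : 1 ≤ K) (γ : ℝ) (hγ : 0 < γ)
    (W μ : Fin K → ℝ) (hW : ∀ k, 0 < W k) (hμ : ∀ k, μ k ∈ Set.Ioo (0:ℝ) 1) :
    ∃! p : ℝ, p ∈ Set.Ioo (0:ℝ) 1 ∧ ∑ k, crraDemand γ (W k) (μ k) p = 0 := by
  haveI : Nonempty (Fin K) := Fin.pos_iff_nonempty.mp hK
  have hne : (Finset.univ : Finset (Fin K)).Nonempty := Finset.univ_nonempty
  set F : ℝ → ℝ := fun p => ∑ k, crraDemand γ (W k) (μ k) p with hF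
  set a := Finset.univ.inf' hne μ with ha
  set b := Finset.univ.sup' hne μ with hb
  obtain ⟨ka, -, hka⟩ := Finset.exists_mem_eq_inf' hne μ
  obtain ⟨kb, -, hkb⟩ := Finset.exists_mem_eq_sup' hne μ
  have ha0 : 0 < a := by rw [ha, hka]; exact (hμ ka).1
  have ha1 : a < 1 := by rw [ha, hka]; exact (hμ ka).2
  have hb0 : 0 < b := by rw [hb, hkb]; exact (hμ kb).1
  have hb1 : b < 1 := by rw [hb, hkb]; exact (hμ kb).2
  set pa := a / 2 with hpa
  set pb := (b + 1) / 2 with hpb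
  have hpaI : pa ∈ Set.Ioo (0:ℝ) 1 := ⟨by positivity, by linarith⟩
  have hpbI : pb ∈ Set.Ioo (0:ℝ) 1 := ⟨by linarith, by linarith⟩
  have hpamu : ∀ k, pa < μ k := fun k => by
    have := Finset.inf'_le μ (Finset.mem_univ k); linarith
  have hpbmu : ∀ k, μ k < pb := fun k => by
    have := Finset.le_sup' μ (Finset.mem_univ k); linarith
  have hab : pa < pb := lt_trans (hpamu ⟨0, hK⟩) (hpbmu ⟨0, hK⟩)
  have hIcc : Set.Icc pa pb ⊆ Set.Ioo (0:ℝ) 1 := fun x hx =>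
    ⟨lt_of_lt_of_le hpaI.1 hx.1, lt_of_le_of_lt hx.2 hpbI.2⟩
  have hFpa : 0 < F pa :=
    Finset.sum_pos (fun k _ => crraDemand_pos γ hγ _ _ (hW k) (hμ k) hpaI (hpamu k)) hne
  have hFpb : F pb < 0 :=
    Finset.sum_neg (fun k _ => crraDemand_neg γ hγ _ _ (hW k) (hμ k) hpbI (hpbmu k)) hne
  have hcont : ContinuousOn F (Set.Icc pa pb) :=
    continuousOn_finset_sum _ fun k _ => (crraDemand_contOn γ hγ _ _).mono hIcc
  have hivt := intermediate_value_Icc' hab.le hcont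
  have h0 : (0:ℝ) ∈ Set.Icc (F pb) (F pa) := ⟨hFpb.le, hFpa.le⟩
  obtain ⟨p, hpmem, hFp⟩ := hivt h0
  have hanti : ∀ {x y : ℝ}, x ∈ Set.Ioo (0:ℝ) 1 → y ∈ Set.Ioo (0:ℝ) 1 → x < y →
      F y < F x := fun hx hy hxy =>
    Finset.sum_lt_sum_of_nonempty hne fun k _ =>
      crraDemand_anti γ hγ _ _ (hW k) (hμ k) hx hy hxy
  refine ⟨p, ⟨hIcc hpmem, hFp⟩, ?_⟩
  rintro q ⟨hqI, hFq⟩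
  have hFq' : F q = 0 := hFq
  rcases lt_trichotomy q p with h | h | h
  · exact absurd (hanti hqI (hIcc hpmem) h) (by rw [hFp, hFq']; simp)
  · exact h
  · exact absurd (hanti (hIcc hpmem) hqI h) (by rw [hFp, hFq']; simp)
end

section
/- Let γ > 0, W > 0, and μ ∈ (0,1). The map p ↦ W(R(p) − 1)/((1−p) + R(p)·p), where R(p) = exp((logit(μ) − logit(p))/γ), is strictly decreasing on the interval (0,1). -/
/-!
With `x = R(p) - 1` the demand is `W * x / (1 + x * p)`. Since `logit` is increasing, `x` decreases
strictly as `p` grows; and `x / (1 + x * p)` is strictly increasing in `x` and, its `p`-derivative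
being `-x² / (1 + x * p)²`, nonincreasing in `p`.
-/

open Real

theorem logit_strictMonoOn : StrictMonoOn logit (Set.Ioo 0 1) := by
  rintro p ⟨hp0, hp1⟩ q ⟨-, hq1⟩ hpq
  have hodds : p / (1 - p) < q / (1 - q) := by
    rw [div_lt_div_iff₀ (by linarith) (by linarith)]
    nlinarith
  exact Real.log_lt_log (div_pos hp0 (by linarith)) hodds

theorem div_one_add_mul_lt_div_one_add_mul {x y p q : ℝ} (hp : 0 ≤ p) (hpq : p ≤ q)
    (hxy : x < y) (hxq : 0 < 1 + x * q) (hyp : 0 < 1 + y * p) :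
    x / (1 + x * q) < y / (1 + y * p) := by
  have hxp : 0 < 1 + x * p := by
    rcases le_or_gt 0 x with hx | hx
    · positivity
    · nlinarith
  calc x / (1 + x * q) ≤ x / (1 + x * p) := by
        rw [div_le_div_iff₀ hxq hxp]
        nlinarith [mul_nonneg (sq_nonneg x) (sub_nonneg.2 hpq)]
    _ < y / (1 + y * p) := by
        rw [div_lt_div_iff₀ hxp hyp]
        linarith

theorem crra_demand_strictAntiOn_price_general
    (γ W μ : ℝ) (hγ : 0 < γ) (hW : 0 < W) :
    StrictAntiOn
      (fun p : ℝ =>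
        W * (Real.exp ((logit μ - logit p) / γ) - 1) /
          ((1 - p) + Real.exp ((logit μ - logit p) / γ) * p))
      (Set.Ioo (0:ℝ) 1) := by
  intro p hp q hq hpq
  set R : ℝ → ℝ := fun r => Real.exp ((logit μ - logit r) / γ)
  have hR : R q < R p := Real.exp_lt_exp.2 <|
    div_lt_div_of_pos_right (sub_lt_sub_left (logit_strictMonoOn hp hq hpq) _) hγ
  have hden : ∀ r ∈ Set.Ioo (0:ℝ) 1, 0 < 1 + (R r - 1) * r := fun r hr => by
    nlinarith [hr.1, hr.2, Real.exp_pos ((logit μ - logit r) / γ)]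
  have key := div_one_add_mul_lt_div_one_add_mul hp.1.le hpq.le (sub_lt_sub_right hR 1)
    (hden q hq) (hden p hp)
  simp only [mul_div_assoc]
  convert mul_lt_mul_of_pos_left key hW using 3 <;> ring

/-- The CRRA binary-asset demand, viewed as a function of the price `p`,
is strictly decreasing on `(0,1)`. -/
theorem crra_demand_strictAntiOn_price
    (γ W μ : ℝ) (hγ : 0 < γ) (hW : 0 < W) (hμ : μ ∈ Set.Ioo (0:ℝ) 1) :
    StrictAntiOn
      (fun p : ℝ =>
        W * (Real.exp ((logit μ - logit p) / γ) - 1) /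
          ((1 - p) + Real.exp ((logit μ - logit p) / γ) * p))
      (Set.Ioo (0:ℝ) 1) :=
  crra_demand_strictAntiOn_price_general γ W μ hγ hW
end

section
/- Fix K ≥ 1 and u_1,…,u_K ∈ ℝ, and set U_1 = Σ_{k=1}^K u_k and U_3 = Σ_{k=1}^K u_k³. Define g(τ) = (1/K)Σ_{k=1}^K Λ(τ u_k) − Λ(τ U_1 / K) for τ ∈ ℝ. Then, as τ → 0, g(τ) + (τ³/(48K))·(U_3 − U_1³/K²) = O(τ⁵); that is, the function τ ↦ g(τ) + (τ³/(48K))(U_3 − U_1³/K²) is big-O of τ⁵ at τ = 0. -/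
/-!
Λ agrees with its Taylor polynomial `P(z) = 1/2 + z/4 - z³/48` up to `O(z⁵)`. Replacing Λ by `P`
in `g` therefore costs only `O(τ⁵)`, and for `P` the Jensen gap is exact: the affine part
cancels in the average, leaving `-(τ³/48)` times the mean of the cubes minus the cube of the mean.
-/

open Real Asymptotics Filter

/-- The logistic function `Λ(z) = 1/(1+e^{−z})`. -/
noncomputable def logistic (z : ℝ) : ℝ := 1 / (1 + Real.exp (-z))

open Topology

-- Λ - 1/2 is odd, so this degree-3 polynomial is already the degree-4 Taylor polynomial at 0.
noncomputable def logisticTaylor (z : ℝ) : ℝ := 1 / 2 + z / 4 - z ^ 3 / 48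

theorem continuous_logistic : Continuous logistic :=
  continuous_const.div (by fun_prop) fun z => by positivity

theorem Asymptotics.IsBigO.comp_mul_const_pow {𝕜 E : Type*} [NormedField 𝕜] [Norm E]
    {f : 𝕜 → E} {n : ℕ} (hf : f =O[𝓝 0] (· ^ n)) (c : 𝕜) :
    (fun x => f (x * c)) =O[𝓝 0] (· ^ n) := by
  have hc : Tendsto (· * c) (𝓝 (0 : 𝕜)) (𝓝 0) := by
    simpa using (continuous_mul_const c).tendsto 0
  refine (hf.comp_tendsto hc).trans ?_
  simpa only [Function.comp_def, mul_pow, mul_comm _ (c ^ n)] using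
    isBigO_const_mul_self (c ^ n) (· ^ n : 𝕜 → 𝕜) (𝓝 0)

theorem exp_neg_sub_taylor_isBigO :
    (fun z : ℝ => exp (-z) - (1 - z + z ^ 2 / 2 - z ^ 3 / 6 + z ^ 4 / 24)) =O[𝓝 0] (· ^ 5) := by
  have h := ((Real.exp_sub_sum_range_isBigO_pow 5).comp_mul_const_pow (-1))
  refine h.congr_left fun z => ?_
  simp only [Finset.sum_range_succ, Finset.sum_range_zero, Nat.factorial, mul_neg_one]
  push_cast
  ring

theorem logistic_sub_logisticTaylor_isBigO :
    (fun z => logistic z - logisticTaylor z) =O[𝓝 0] (· ^ 5) := by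
  have hexp : (fun z : ℝ => (exp (-z) - (1 - z + z ^ 2 / 2 - z ^ 3 / 6 + z ^ 4 / 24)) *
      (logistic z * logisticTaylor z)) =O[𝓝 0] (· ^ 5) := by
    simpa using exp_neg_sub_taylor_isBigO.mul <|
      (continuous_logistic.mul (show Continuous logisticTaylor by unfold logisticTaylor; fun_prop)
        ).continuousAt.isBigO_one ℝ
  have hpoly : (fun z : ℝ => z ^ 5 * (logistic z * (z ^ 2 / 1152 - z / 288))) =O[𝓝 0] (· ^ 5) := by
    simpa using (isBigO_refl (· ^ 5) (𝓝 (0 : ℝ))).mul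
      ((continuous_logistic.mul (by fun_prop)).continuousAt.isBigO_one ℝ)
  -- `Λ - P = Λ * (1 - (1 + e^{-z}) P)`, and with `e^{-z}` replaced by its Taylor polynomial
  -- the second factor becomes `z⁶/1152 · (z - 4)`.
  refine (hexp.neg_left.add hpoly).congr' (Eventually.of_forall fun z => ?_) (by simp)
  have : 1 + exp (-z) ≠ 0 := by positivity
  simp only [logistic, logisticTaylor]
  field_simp
  ring

theorem mean_logisticTaylor_sub_logisticTaylor_mean {ι : Type*} [Fintype ι] [Nonempty ι]
    (u : ι → ℝ) (τ : ℝ) :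
    (1 / Fintype.card ι) * ∑ i, logisticTaylor (τ * u i)
        - logisticTaylor (τ * ((∑ i, u i) / Fintype.card ι))
      = -(τ ^ 3 / (48 * Fintype.card ι)) *
          (∑ i, u i ^ 3 - (∑ i, u i) ^ 3 / (Fintype.card ι : ℝ) ^ 2) := by
  have hcard : (Fintype.card ι : ℝ) ≠ 0 := by positivity
  simp only [logisticTaylor, Finset.sum_sub_distrib, Finset.sum_add_distrib, Finset.sum_const,
    Finset.card_univ, nsmul_eq_mul, ← Finset.sum_div, mul_pow, ← Finset.mul_sum]
  field_simp
  ring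

/-- Jensen-gap expansion. With `U₁ = Σ u_k`, `U₃ = Σ u_k³` and
`g(τ) = (1/K)Σ_k Λ(τu_k) − Λ(τU₁/K)`, one has
`g(τ) + (τ³/(48K))(U₃ − U₁³/K²) = O(τ⁵)` as `τ → 0`. -/
theorem jensen_gap_expansion
    (K : ℕ) (hK : 1 ≤ K) (u : Fin K → ℝ)
    (U₁ U₃ : ℝ) (hU₁ : U₁ = ∑ k, u k) (hU₃ : U₃ = ∑ k, (u k) ^ 3)
    (g : ℝ → ℝ)
    (hg : ∀ τ : ℝ, g τ = (1 / K) * (∑ k, logistic (τ * u k)) - logistic (τ * U₁ / K)) :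
    (fun τ : ℝ => g τ + (τ ^ 3 / (48 * K)) * (U₃ - U₁ ^ 3 / (K : ℝ) ^ 2))
      =O[nhds 0] (fun τ : ℝ => τ ^ 5) := by
  have : Nonempty (Fin K) := ⟨⟨0, hK⟩⟩
  have hrem (c : ℝ) := logistic_sub_logisticTaylor_isBigO.comp_mul_const_pow c
  have hsum := IsBigO.sum (s := Finset.univ) fun k _ => hrem (u k)
  refine ((hsum.const_mul_left (1 / K)).sub (hrem (U₁ / K))).congr_left fun τ => ?_
  have hpoly := mean_logisticTaylor_sub_logisticTaylor_mean u τ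
  rw [Fintype.card_fin, ← hU₁, ← hU₃] at hpoly
  rw [hg, mul_div_assoc, Finset.sum_apply, Finset.sum_sub_distrib]
  linarith
end

section
/- Let D ⊂ ℝ be a nonempty open interval and U : D → ℝ three times continuously differentiable with U'(W) > 0 and U''(W) < 0 for all W ∈ D, and let α : (0,1) × D → (0,∞). Suppose that for every p ∈ (0,1), W ∈ D, and μ ∈ (0,1) such that, with x = (logit(μ) − logit(p))/α(p,W), both W + (1−p)x ∈ D and W − p x ∈ D, the first-order condition μ(1−p)·U'(W + (1−p)x) = (1−μ)p·U'(W − p x) holds. Then there exist constants α₀ > 0, a ∈ ℝ, and b > 0 such that U(W) = a − b·exp(−α₀ W) for all W ∈ D, and α(p,W) = α₀ for all (p,W) ∈ (0,1) × D. -/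
/-!
Write `g = log U'`. Choosing `μ` with `logit μ = logit p + α(p, W) s` turns the first-order
condition into the secant identity `α(p, W) s + g (W + (1 - p) s) = g (W - p s)`.
Differentiating it at `s = 0` gives `α(p, W) = -g'(W)`, so `α` does not depend on `p`; taking
`s = z - y` and `p = (W - y) / (z - y)` shows that the chord slope of `g` over `[y, z]` equals
`g'(W)` at every interior point `W`. Hence `g'` is constant, `U' = exp g` is an exponential, and
`U` is CARA.
-/

open Real

open Set Filter Topology

theorem logit_sigmoid (y : ℝ) : logit (sigmoid y) = y := by
  have hσ : sigmoid y ≠ 0 := (sigmoid_pos y).ne'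
  rw [logit, ← sigmoid_neg, ← sigmoid_mul_rexp_neg, div_mul_cancel_left₀ hσ, ← exp_neg, neg_neg,
    log_exp]

theorem logit_sub_logit_add_log_eq {μ p X Y : ℝ} (hμ : μ ∈ Ioo (0 : ℝ) 1) (hp : p ∈ Ioo (0 : ℝ) 1)
    (hX : 0 < X) (hY : 0 < Y) (h : μ * (1 - p) * X = (1 - μ) * p * Y) :
    logit μ - logit p + log X = log Y := by
  have hμ' : 0 < 1 - μ := sub_pos.2 hμ.2
  have hp' : 0 < 1 - p := sub_pos.2 hp.2
  have hlog := congrArg log h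
  rw [log_mul (mul_pos hμ.1 hp').ne' hX.ne', log_mul hμ.1.ne' hp'.ne',
    log_mul (mul_pos hμ' hp.1).ne' hY.ne',
    log_mul hμ'.ne' hp.1.ne'] at hlog
  rw [logit, logit, log_div hμ.1.ne' hμ'.ne', log_div hp.1.ne' hp'.ne']
  linarith

theorem log_secant_of_foc {f : ℝ → ℝ} {D : Set ℝ} {p W c s : ℝ} (hp : p ∈ Ioo (0 : ℝ) 1)
    (hc : c ≠ 0) (hf : ∀ x ∈ D, 0 < f x)
    (hfoc : ∀ μ ∈ Ioo (0 : ℝ) 1,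
      W + (1 - p) * ((logit μ - logit p) / c) ∈ D →
      W - p * ((logit μ - logit p) / c) ∈ D →
      μ * (1 - p) * f (W + (1 - p) * ((logit μ - logit p) / c))
        = (1 - μ) * p * f (W - p * ((logit μ - logit p) / c)))
    (hx : W + (1 - p) * s ∈ D) (hy : W - p * s ∈ D) :
    c * s + log (f (W + (1 - p) * s)) = log (f (W - p * s)) := by
  set μ := sigmoid (logit p + c * s)
  have hμ : μ ∈ Ioo (0 : ℝ) 1 := ⟨sigmoid_pos _, sigmoid_lt_one _⟩
  have hgap : logit μ - logit p = c * s := by rw [logit_sigmoid]; ring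
  have hdemand : (logit μ - logit p) / c = s := by rw [hgap, mul_div_cancel_left₀ s hc]
  have h := hfoc μ hμ (by rwa [hdemand]) (by rwa [hdemand])
  rw [hdemand] at h
  rw [← hgap]
  exact logit_sub_logit_add_log_eq hμ hp (hf _ hx) (hf _ hy) h

theorem eq_neg_of_secant {g : ℝ → ℝ} {D : Set ℝ} {c p W g' : ℝ} (hg : HasDerivAt g g' W)
    (hD : D ∈ 𝓝 W)
    (h : ∀ s, W + (1 - p) * s ∈ D → W - p * s ∈ D →
      c * s + g (W + (1 - p) * s) = g (W - p * s)) :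
    c = -g' := by
  have hup : HasDerivAt (fun s => W + (1 - p) * s) (1 - p) 0 := by
    simpa using ((hasDerivAt_id (0 : ℝ)).const_mul (1 - p)).const_add W
  have hdown : HasDerivAt (fun s => W - p * s) (-p) 0 := by
    simpa using ((hasDerivAt_id (0 : ℝ)).const_mul p).const_sub W
  have hlhs : HasDerivAt (fun s => c * s + g (W + (1 - p) * s)) (c * 1 + g' * (1 - p)) 0 :=
    ((hasDerivAt_id 0).const_mul c).add
      ((by simpa using hg : HasDerivAt g g' (W + (1 - p) * 0)).comp 0 hup)
  have hrhs : HasDerivAt (fun s => g (W - p * s)) (g' * -p) 0 :=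
    (by simpa using hg : HasDerivAt g g' (W - p * 0)).comp 0 hdown
  have heq : (fun s => c * s + g (W + (1 - p) * s)) =ᶠ[𝓝 0] fun s => g (W - p * s) := by
    filter_upwards [hup.continuousAt.preimage_mem_nhds (by simpa using hD),
      hdown.continuousAt.preimage_mem_nhds (by simpa using hD)] with s hx hy
    exact h s hx hy
  have := (hlhs.congr_of_eventuallyEq heq.symm).unique hrhs
  linarith

theorem chord_eq_of_secant {g A : ℝ → ℝ} {a b : ℝ}
    (h : ∀ p ∈ Ioo (0 : ℝ) 1, ∀ W ∈ Ioo a b, ∀ s, W + (1 - p) * s ∈ Ioo a b →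
      W - p * s ∈ Ioo a b → A W * s + g (W + (1 - p) * s) = g (W - p * s))
    (y W z : ℝ) (hay : a < y) (hyW : y < W) (hWz : W < z) (hzb : z < b) :
    g y - g z = A W * (z - y) := by
  have hzy : 0 < z - y := by linarith
  have hp : (W - y) / (z - y) ∈ Ioo (0 : ℝ) 1 :=
    ⟨div_pos (by linarith) hzy, (div_lt_one hzy).2 (by linarith)⟩
  have hup : W + (1 - (W - y) / (z - y)) * (z - y) = z := by field_simp; ring
  have hdown : W - (W - y) / (z - y) * (z - y) = y := by field_simp; ring
  have := h _ hp W ⟨by linarith, by linarith⟩ (z - y) (by rw [hup]; exact ⟨by linarith, hzb⟩)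
    (by rw [hdown]; exact ⟨hay, by linarith⟩)
  rw [hup, hdown] at this
  linarith

section ChordSlope

variable {g A : ℝ → ℝ} {a b : ℝ}
  (h : ∀ y W z, a < y → y < W → W < z → z < b → g y - g z = A W * (z - y))
include h

theorem eq_of_chord_eq {x w : ℝ} (hx : x ∈ Ioo a b) (hw : w ∈ Ioo a b) : A x = A w := by
  have hy : a < (a + min x w) / 2 := by linarith [lt_min hx.1 hw.1]
  have hz : (max x w + b) / 2 < b := by linarith [max_lt hx.2 hw.2]
  have hx' := h _ x _ hy (by linarith [min_le_left x w, hx.1])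
    (by linarith [le_max_left x w, hx.2]) hz
  have hw' := h _ w _ hy (by linarith [min_le_right x w, hw.1])
    (by linarith [le_max_right x w, hw.2]) hz
  have hzy : (max x w + b) / 2 - (a + min x w) / 2 ≠ 0 := by
    linarith [min_le_left x w, le_max_left x w, hx.1, hx.2]
  exact mul_right_cancel₀ hzy (hx'.symm.trans hw')

theorem exists_affine_of_chord_eq :
    ∃ c d, (∀ x ∈ Ioo a b, A x = c) ∧ ∀ x ∈ Ioo a b, g x = d - c * x := by
  rcases (Ioo a b).eq_empty_or_nonempty with hempty | ⟨m, hm⟩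
  · exact ⟨0, 0, by simp [hempty], by simp [hempty]⟩
  refine ⟨A m, g m + A m * m, fun x hx => eq_of_chord_eq h hx hm, fun x hx => ?_⟩
  have hmid : A ((x + m) / 2) = A m :=
    eq_of_chord_eq h ⟨by linarith [hx.1, hm.1], by linarith [hx.2, hm.2]⟩ hm
  rcases lt_trichotomy x m with hxm | rfl | hmx
  · have := h x ((x + m) / 2) m hx.1 (by linarith) (by linarith) hm.2
    rw [hmid] at this
    linarith
  · ring
  · have := h m ((x + m) / 2) x hm.1 (by linarith) (by linarith) hx.2
    rw [hmid] at this
    linarith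

end ChordSlope

theorem exists_eq_sub_mul_exp_of_hasDerivAt {U : ℝ → ℝ} {s : Set ℝ} {K c : ℝ} (hs : IsOpen s)
    (hs' : IsPreconnected s) (hc : c ≠ 0) (hU : ∀ x ∈ s, HasDerivAt U (K * exp (-c * x)) x) :
    ∃ a₀, ∀ x ∈ s, U x = a₀ - K / c * exp (-c * x) := by
  have hV : ∀ x, HasDerivAt (fun x => -(K / c) * exp (-c * x)) (K * exp (-c * x)) x := by
    intro x
    refine ((((hasDerivAt_id x).const_mul (-c)).exp).const_mul (-(K / c))).congr_deriv ?_
    field_simp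
    simp
  obtain ⟨a₀, ha₀⟩ := hs.exists_eq_add_of_deriv_eq hs'
    (fun x hx => (hU x hx).differentiableAt.differentiableWithinAt)
    (fun x _ => (hV x).differentiableAt.differentiableWithinAt)
    (fun x hx => by rw [(hU x hx).deriv, (hV x).deriv])
  exact ⟨a₀, fun x hx => by rw [ha₀ hx]; ring⟩

theorem cara_uniqueness_logodds_linear_demand_general
    (a b : ℝ) (hab : a < b) (U : ℝ → ℝ)
    (hU : ContDiffOn ℝ 3 U (Set.Ioo a b))
    (hU' : ∀ W ∈ Set.Ioo a b, 0 < deriv U W)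
    (α : ℝ → ℝ → ℝ)
    (hαpos : ∀ p ∈ Set.Ioo (0:ℝ) 1, ∀ W ∈ Set.Ioo a b, 0 < α p W)
    (hFOC : ∀ p ∈ Set.Ioo (0:ℝ) 1, ∀ W ∈ Set.Ioo a b, ∀ μ ∈ Set.Ioo (0:ℝ) 1,
      W + (1 - p) * ((logit μ - logit p) / α p W) ∈ Set.Ioo a b →
      W - p * ((logit μ - logit p) / α p W) ∈ Set.Ioo a b →
      μ * (1 - p) * deriv U (W + (1 - p) * ((logit μ - logit p) / α p W))
        = (1 - μ) * p * deriv U (W - p * ((logit μ - logit p) / α p W))) :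
    ∃ α₀ : ℝ, 0 < α₀ ∧ ∃ a₀ : ℝ, ∃ b₀ : ℝ, 0 < b₀ ∧
      (∀ W ∈ Set.Ioo a b, U W = a₀ - b₀ * Real.exp (-α₀ * W)) ∧
      (∀ p ∈ Set.Ioo (0:ℝ) 1, ∀ W ∈ Set.Ioo a b, α p W = α₀) := by
  have hU₁ : ∀ W ∈ Ioo a b, HasDerivAt U (deriv U W) W := fun W hW =>
    ((hU.contDiffAt (Ioo_mem_nhds hW.1 hW.2)).differentiableAt (by norm_num)).hasDerivAt
  have hU₂ : ∀ W ∈ Ioo a b, HasDerivAt (deriv U) (deriv (deriv U) W) W := fun W hW =>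
    (((hU.deriv_of_isOpen isOpen_Ioo (m := 2) (by norm_num)).contDiffAt
      (Ioo_mem_nhds hW.1 hW.2)).differentiableAt (by norm_num)).hasDerivAt
  have hsecant : ∀ p ∈ Ioo (0 : ℝ) 1, ∀ W ∈ Ioo a b, ∀ s,
      W + (1 - p) * s ∈ Ioo a b → W - p * s ∈ Ioo a b →
      α p W * s + log (deriv U (W + (1 - p) * s)) = log (deriv U (W - p * s)) :=
    fun p hp W hW _ => log_secant_of_foc hp (hαpos p hp W hW).ne' hU' (hFOC p hp W hW)
  have hα : ∀ p ∈ Ioo (0 : ℝ) 1, ∀ W ∈ Ioo a b, α p W = -(deriv (deriv U) W / deriv U W) :=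
    fun p hp W hW => eq_neg_of_secant ((hU₂ W hW).log (hU' W hW).ne') (Ioo_mem_nhds hW.1 hW.2)
      (hsecant p hp W hW)
  obtain ⟨α₀, d, hA, hlog⟩ := exists_affine_of_chord_eq <| chord_eq_of_secant
    (g := fun x => log (deriv U x)) fun p hp W hW => hα p hp W hW ▸ hsecant p hp W hW
  have hm : (a + b) / 2 ∈ Ioo a b := ⟨by linarith, by linarith⟩
  have hconst : ∀ p ∈ Ioo (0 : ℝ) 1, ∀ W ∈ Ioo a b, α p W = α₀ :=
    fun p hp W hW => (hα p hp W hW).trans (hA W hW)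
  have hhalf : (1 / 2 : ℝ) ∈ Ioo 0 1 := by norm_num
  have hα₀ : 0 < α₀ := hconst _ hhalf _ hm ▸ hαpos _ hhalf _ hm
  have hUexp : ∀ x ∈ Ioo a b, HasDerivAt U (exp d * exp (-α₀ * x)) x := fun x hx => by
    rw [← exp_add, neg_mul, ← sub_eq_add_neg, ← hlog x hx, exp_log (hU' x hx)]
    exact hU₁ x hx
  obtain ⟨a₀, ha₀⟩ :=
    exists_eq_sub_mul_exp_of_hasDerivAt isOpen_Ioo isPreconnected_Ioo hα₀.ne' hUexp
  exact ⟨α₀, hα₀, a₀, exp d / α₀, by positivity, ha₀, hconst⟩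

/-- CARA is the unique smooth concave utility whose binary-asset demand
is linear in the log-odds gap. If `U` is C³ on an open interval with `U' > 0`, `U'' < 0`,
and `x = (logit μ − logit p)/α(p,W)` satisfies the first-order condition whenever both
terminal wealths stay in the domain, then `U(W) = a − b·exp(−α₀W)` with `α(p,W) ≡ α₀`. -/
theorem cara_uniqueness_logodds_linear_demand
    (a b : ℝ) (hab : a < b) (U : ℝ → ℝ)
    (hU : ContDiffOn ℝ 3 U (Set.Ioo a b))
    (hU' : ∀ W ∈ Set.Ioo a b, 0 < deriv U W)
    (hU'' : ∀ W ∈ Set.Ioo a b, deriv (deriv U) W < 0)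
    (α : ℝ → ℝ → ℝ)
    (hαpos : ∀ p ∈ Set.Ioo (0:ℝ) 1, ∀ W ∈ Set.Ioo a b, 0 < α p W)
    (hFOC : ∀ p ∈ Set.Ioo (0:ℝ) 1, ∀ W ∈ Set.Ioo a b, ∀ μ ∈ Set.Ioo (0:ℝ) 1,
      W + (1 - p) * ((logit μ - logit p) / α p W) ∈ Set.Ioo a b →
      W - p * ((logit μ - logit p) / α p W) ∈ Set.Ioo a b →
      μ * (1 - p) * deriv U (W + (1 - p) * ((logit μ - logit p) / α p W))
        = (1 - μ) * p * deriv U (W - p * ((logit μ - logit p) / α p W))) :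
    ∃ α₀ : ℝ, 0 < α₀ ∧ ∃ a₀ : ℝ, ∃ b₀ : ℝ, 0 < b₀ ∧
      (∀ W ∈ Set.Ioo a b, U W = a₀ - b₀ * Real.exp (-α₀ * W)) ∧
      (∀ p ∈ Set.Ioo (0:ℝ) 1, ∀ W ∈ Set.Ioo a b, α p W = α₀) :=
  cara_uniqueness_logodds_linear_demand_general a b hab U hU hU' α hαpos hFOC
end
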